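/- Let A be an associative algebra with invertible elements w^{1/2}, x^{1/2}, y^{1/2}, a^{1/2}, b^{1/2}, c^{1/2} (with q^{1/2} central, invertible), where x^{1/2}w^{1/2} = q^{1/2}w^{1/2}x^{1/2}, x^{1/2}y^{1/2} = q^{1/2}y^{1/2}x^{1/2}, w^{1/2}y^{1/2} = y^{1/2}w^{1/2}, and set w = (w^{1/2})², x = (x^{1/2})², y = (y^{1/2})². Suppose the four matrix-entry equations hold: (1) w^{1/2}x^{1/2}y^{1/2} + w^{1/2}x^{-1/2}y^{1/2} = a^{1/2}b^{1/2}c^{1/2}; (2) w^{1/2}x^{-1/2}y^{-1/2} = a^{1/2}b^{1/2}c^{-1/2}; (3) w^{-1/2}x^{-1/2}y^{1/2} = a^{-1/2}b^{1/2}c^{1/2}; (4) w^{-1/2}x^{-1/2}y^{-1/2} = a^{-1/2}b^{1/2}c^{-1/2} + a^{-1/2}b^{-1/2}c^{-1/2}, with a = (a^{1/2})², b = (b^{1/2})², c = (c^{1/2})², and suppose a^{1/2}, b^{1/2}, c^{1/2} satisfy b^{1/2}a^{1/2} = q^{-1/2}a^{1/2}b^{1/2}, b^{1/2}c^{1/2}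 = q^{-1/2}c^{1/2}b^{1/2}, a^{1/2}c^{1/2} = c^{1/2}a^{1/2}. Then a = w(1 + qx), c = y(1 + qx), and b = x⁻¹ (the quantum cluster mutation). -/

import Mathlib

/-!
Write `a, b, c, w, x, y` for the square roots `a2, …, y2` and `s = q^{1/2}`. Entries (1) and (3)
give `a² = (abc)(a⁻¹bc)⁻¹ = w (x² + 1) w`, and `x² w = s² w x²` turns this into
`w² (1 + s² x²)`; entries (1) and (2) give `c² = y² (1 + s² x²)` in the same way. For `b`,
square entry (2): each side is a product of three factors commuting pairwise up to powers of `s`,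
so its square is `s⁻²` times the product of the squares. Hence `a² b² c⁻² = w² x⁻² y⁻²`, and
substituting `a²` and `c²` leaves `b² = x⁻²`.
-/

def QCommute {R A : Type*} [CommSemiring R] [Semiring A] [Algebra R A] (q : R) (u v : A) :
    Prop :=
  u * v = q • (v * u)

section QCommute

variable {R A : Type*} [CommSemiring R] [Semiring A] [Algebra R A] {q : R} {u v : A}

theorem qCommute_iff_mul_eq_algebraMap_mul :
    QCommute q u v ↔ u * v = algebraMap R A q * (v * u) := by
  rw [QCommute, Algebra.smul_def]

theorem Commute.qCommute_one (h : Commute u v) : QCommute (1 : R) u v := by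
  rw [QCommute, one_smul]
  exact h

namespace QCommute

theorem symm {K : Type*} [Semifield K] [Algebra K A] {q : K} (hq : q ≠ 0) (h : QCommute q u v) :
    QCommute q⁻¹ v u := by
  rw [QCommute, h, inv_smul_smul₀ hq]

theorem units_inv_of_right {x : Aˣ} (h : QCommute q u (x : A)) : QCommute q ↑x⁻¹ u := by
  calc ↑x⁻¹ * u = ↑x⁻¹ * (u * x) * ↑x⁻¹ := by rw [mul_assoc, Units.mul_inv_cancel_right]
    _ = q • (u * ↑x⁻¹) := by
      rw [h, mul_smul_comm, smul_mul_assoc, Units.inv_mul_cancel_left]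

theorem units_inv_of_left {x : Aˣ} (h : QCommute q (x : A) v) : QCommute q v ↑x⁻¹ := by
  calc v * ↑x⁻¹ = ↑x⁻¹ * (x * v) * ↑x⁻¹ := by rw [Units.inv_mul_cancel_left]
    _ = q • (↑x⁻¹ * v) := by
      rw [h, mul_smul_comm, smul_mul_assoc, mul_assoc, Units.mul_inv_cancel_right]

theorem mul_mul_left (h : QCommute q u v) (t : A) : u * (v * t) = q • (v * (u * t)) := by
  rw [← mul_assoc, h, smul_mul_assoc, mul_assoc]

theorem pow_left (h : QCommute q u v) (n : ℕ) : QCommute (q ^ n) (u ^ n) v := by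
  induction n with
  | zero => simp [QCommute]
  | succ n ih =>
    rw [QCommute, pow_succ, mul_assoc, h, mul_smul_comm, ← mul_assoc, ih, smul_mul_assoc,
      smul_smul, mul_assoc, ← pow_succ, ← pow_succ']

theorem sq_add_one_mul (h : QCommute q u v) : (u ^ 2 + 1) * v = v * (1 + q ^ 2 • u ^ 2) := by
  rw [add_mul, h.pow_left 2, mul_add, mul_smul_comm, one_mul, mul_one, add_comm]

theorem mul_mul_sq {z : A} {q₁ q₂ q₃ : R} (h₁ : QCommute q₁ v u) (h₂ : QCommute q₂ z u)
    (h₃ : QCommute q₃ z v) : (u * v * z) ^ 2 = (q₁ * q₂ * q₃) • (u ^ 2 * v ^ 2 * z ^ 2) := by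
  simp only [sq, mul_assoc, h₁.mul_mul_left, h₂.mul_mul_left, h₃.mul_mul_left, mul_smul_comm,
    smul_smul]
  congr 1
  ring

end QCommute

end QCommute

namespace Units

section Monoid

variable {M : Type*} [Monoid M]

theorem sq_eq_mul_mul_mul_inv (a b c : Mˣ) : (a : M) ^ 2 = ↑(a * b * c) * ↑(a⁻¹ * b * c)⁻¹ := by
  rw [← val_mul, ← val_pow_eq_pow_val]
  congr 1
  rw [sq]
  group

theorem sq_eq_inv_mul_mul_mul (a b c : Mˣ) : (c : M) ^ 2 = ↑(a * b * c⁻¹)⁻¹ * ↑(a * b * c) := by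
  rw [← val_mul, ← val_pow_eq_pow_val]
  congr 1
  rw [sq]
  group

end Monoid

section Semiring

variable {A : Type*} [Semiring A]

theorem mul_add_inv_mul_mul_inv_eq (w x y : Aˣ) :
    (w * x * y + w * ↑x⁻¹ * y : A) * ↑(w⁻¹ * x⁻¹ * y)⁻¹ = w * ((x : A) ^ 2 + 1) * w := by
  simp only [mul_inv_rev, inv_inv, val_mul, sq, add_mul, mul_add, mul_assoc,
    mul_inv_cancel_left, inv_mul_cancel_left, mul_one]

theorem inv_mul_mul_add_inv_mul_eq (w x y : Aˣ) :
    ↑(w * x⁻¹ * y⁻¹)⁻¹ * (w * x * y + w * ↑x⁻¹ * y : A) = y * ((x : A) ^ 2 + 1) * y := by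
  simp only [mul_inv_rev, inv_inv, val_mul, sq, add_mul, mul_add, mul_assoc,
    mul_inv_cancel_left, inv_mul_cancel_left, mul_one]

theorem sq_eq_of_sq_mul_sq_mul_inv_sq {a b c w x y : Aˣ} {m : A}
    (ha : (a : A) ^ 2 = w ^ 2 * m) (hc : (c : A) ^ 2 = y ^ 2 * m) (hm : Commute (x : A) m)
    (h : (a : A) ^ 2 * b ^ 2 * ↑c⁻¹ ^ 2 = w ^ 2 * x ^ 2 * ↑y⁻¹ ^ 2) : (b : A) ^ 2 = x ^ 2 := by
  have hm2 : Commute (↑(x ^ 2) : A) m := by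
    rw [val_pow_eq_pow_val]
    exact hm.pow_left 2
  calc (b : A) ^ 2 = ↑a⁻¹ ^ 2 * ((a : A) ^ 2 * b ^ 2 * ↑c⁻¹ ^ 2) * c ^ 2 := by
        simp only [← val_pow_eq_pow_val, inv_pow, mul_assoc, inv_mul_cancel_left, inv_mul,
          mul_one]
    _ = ↑a⁻¹ ^ 2 * (w ^ 2 * x ^ 2 * ↑y⁻¹ ^ 2) * (y ^ 2 * m) := by rw [h, hc]
    _ = ↑a⁻¹ ^ 2 * (w ^ 2 * m) * x ^ 2 := by
        simp only [← val_pow_eq_pow_val, inv_pow, mul_assoc, inv_mul_cancel_left, hm2.eq]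
    _ = x ^ 2 := by
        rw [← ha]
        simp only [← val_pow_eq_pow_val, inv_pow, mul_assoc, inv_mul_cancel_left]

end Semiring

end Units

theorem quantum_cluster_mutation_general {A : Type*} [Ring A] [Algebra (RatFunc ℚ) A]
    (s : A) (hs : s = algebraMap (RatFunc ℚ) A (RatFunc.X : RatFunc ℚ))
    (w2 x2 y2 a2 b2 c2 : Aˣ)
    (hxw : (x2 : A) * w2 = s * ((w2 : A) * x2))
    (hxy : (x2 : A) * y2 = s * ((y2 : A) * x2))
    (hwy : (w2 : A) * y2 = (y2 : A) * w2)
    (hba : (b2 : A) * a2 = algebraMap (RatFunc ℚ) A (RatFunc.X : RatFunc ℚ)⁻¹ * ((a2 : A) * b2))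
    (hbc : (b2 : A) * c2 = algebraMap (RatFunc ℚ) A (RatFunc.X : RatFunc ℚ)⁻¹ * ((c2 : A) * b2))
    (hac : (a2 : A) * c2 = (c2 : A) * a2)
    (h1 : (w2 : A) * x2 * y2 + (w2 : A) * (x2⁻¹ : Aˣ) * y2 = (a2 : A) * b2 * c2)
    (h2 : (w2 : A) * (x2⁻¹ : Aˣ) * (y2⁻¹ : Aˣ) = (a2 : A) * b2 * (c2⁻¹ : Aˣ))
    (h3 : ((w2⁻¹ : Aˣ) : A) * (x2⁻¹ : Aˣ) * y2 = ((a2⁻¹ : Aˣ) : A) * b2 * c2) :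
    ((a2 : A)) ^ 2 = ((w2 : A)) ^ 2 * (1 + s ^ 2 * ((x2 : A)) ^ 2) ∧
    ((c2 : A)) ^ 2 = ((y2 : A)) ^ 2 * (1 + s ^ 2 * ((x2 : A)) ^ 2) ∧
    ((b2 : A)) ^ 2 = (((x2⁻¹ : Aˣ) : A)) ^ 2 := by
  subst hs
  set X : RatFunc ℚ := RatFunc.X
  have hX : X ≠ 0 := RatFunc.X_ne_zero
  rw [← map_pow, ← Algebra.smul_def]
  rw [← qCommute_iff_mul_eq_algebraMap_mul] at hxw hxy hba hbc
  have h1' : (w2 * x2 * y2 + w2 * ↑x2⁻¹ * y2 : A) = ↑(a2 * b2 * c2) := by push_cast; exact h1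
  have h2' : w2 * x2⁻¹ * y2⁻¹ = a2 * b2 * c2⁻¹ := Units.ext (by push_cast; exact h2)
  have h3' : w2⁻¹ * x2⁻¹ * y2 = a2⁻¹ * b2 * c2 := Units.ext (by push_cast; exact h3)
  have ha : (a2 : A) ^ 2 = w2 ^ 2 * (1 + X ^ 2 • (x2 : A) ^ 2) := by
    rw [a2.sq_eq_mul_mul_mul_inv b2 c2, ← h1', ← h3', Units.mul_add_inv_mul_mul_inv_eq,
      mul_assoc, hxw.sq_add_one_mul, ← mul_assoc, ← sq]
  have hc : (c2 : A) ^ 2 = y2 ^ 2 * (1 + X ^ 2 • (x2 : A) ^ 2) := by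
    rw [a2.sq_eq_inv_mul_mul_mul b2 c2, ← h1', ← h2', Units.inv_mul_mul_add_inv_mul_eq,
      mul_assoc, hxy.sq_add_one_mul, ← mul_assoc, ← sq]
  have habc := hba.mul_mul_sq (Commute.qCommute_one hac).units_inv_of_right
    hbc.units_inv_of_right
  have hwxy := (hxw.units_inv_of_left.symm hX).mul_mul_sq
    (Commute.qCommute_one hwy).units_inv_of_right
    (hxy.units_inv_of_left.units_inv_of_left.symm hX)
  have hsq : (a2 : A) ^ 2 * b2 ^ 2 * ↑c2⁻¹ ^ 2 = w2 ^ 2 * ↑x2⁻¹ ^ 2 * ↑y2⁻¹ ^ 2 := by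
    refine smul_right_injective A (by simpa using hX) (habc.symm.trans (Eq.trans ?_ hwxy))
    simp only [← Units.val_mul, h2']
  have hx : Commute (x2 : A) (1 + X ^ 2 • (x2 : A) ^ 2) :=
    (Commute.one_right _).add_right (((Commute.refl _).pow_right 2).smul_right _)
  exact ⟨ha, hc, Units.sq_eq_of_sq_mul_sq_mul_inv_sq ha hc hx.units_inv_left hsq⟩

/-- **Quantum cluster mutation.** Given half-power variables `w^{1/2}, x^{1/2}, y^{1/2}`
and `a^{1/2}, b^{1/2}, c^{1/2}` with the stated commutation relations, the four
matrix-entry equations comparing the two Gauss-type factorizations force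
`a = w(1+qx)`, `c = y(1+qx)`, `b = x⁻¹`, where `q = (q^{1/2})²` and `w,x,y,a,b,c` are the
squares of the half-power variables.  Here `s = q^{1/2}` is the transcendental generator. -/
theorem quantum_cluster_mutation {A : Type*} [Ring A] [Algebra (RatFunc ℚ) A]
    (s : A) (hs : s = algebraMap (RatFunc ℚ) A (RatFunc.X : RatFunc ℚ))
    (w2 x2 y2 a2 b2 c2 : Aˣ)
    (hxw : (x2 : A) * w2 = s * ((w2 : A) * x2))
    (hxy : (x2 : A) * y2 = s * ((y2 : A) * x2))
    (hwy : (w2 : A) * y2 = (y2 : A) * w2)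
    (hba : (b2 : A) * a2 = algebraMap (RatFunc ℚ) A (RatFunc.X : RatFunc ℚ)⁻¹ * ((a2 : A) * b2))
    (hbc : (b2 : A) * c2 = algebraMap (RatFunc ℚ) A (RatFunc.X : RatFunc ℚ)⁻¹ * ((c2 : A) * b2))
    (hac : (a2 : A) * c2 = (c2 : A) * a2)
    (h1 : (w2 : A) * x2 * y2 + (w2 : A) * (x2⁻¹ : Aˣ) * y2 = (a2 : A) * b2 * c2)
    (h2 : (w2 : A) * (x2⁻¹ : Aˣ) * (y2⁻¹ : Aˣ) = (a2 : A) * b2 * (c2⁻¹ : Aˣ))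
    (h3 : ((w2⁻¹ : Aˣ) : A) * (x2⁻¹ : Aˣ) * y2 = ((a2⁻¹ : Aˣ) : A) * b2 * c2)
    (h4 : ((w2⁻¹ : Aˣ) : A) * (x2⁻¹ : Aˣ) * (y2⁻¹ : Aˣ)
        = ((a2⁻¹ : Aˣ) : A) * b2 * (c2⁻¹ : Aˣ) + ((a2⁻¹ : Aˣ) : A) * (b2⁻¹ : Aˣ) * (c2⁻¹ : Aˣ)) :
    ((a2 : A)) ^ 2 = ((w2 : A)) ^ 2 * (1 + s ^ 2 * ((x2 : A)) ^ 2) ∧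
    ((c2 : A)) ^ 2 = ((y2 : A)) ^ 2 * (1 + s ^ 2 * ((x2 : A)) ^ 2) ∧
    ((b2 : A)) ^ 2 = (((x2⁻¹ : Aˣ) : A)) ^ 2 :=
  quantum_cluster_mutation_general s hs w2 x2 y2 a2 b2 c2 hxw hxy hwy hba hbc hac h1 h2 h3
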